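/- Let W₁ be a complex Hilbert space with real structure, and let L₀₁ = graph(Q₁) ⊆ W₁ ⊕ (−W₁) where Q₁ is a bounded ℂ-linear operator with Q₁* = conj(Q₁)^{-1} (in particular Q₁ is invertible), and let L₁₂ ⊆ W₁ ⊕ (−W₂) be any Lagrangian. Then the composition L₀₁ ∘ L₁₂ is a Lagrangian. -/

import Mathlib

/-!
Composing with `graph Q` is pulling back along `Q × id`. Under the real structures this pullback
of `L` becomes the pullback of `conj L` along `conj(Q) × id`. Since `Q* ∘ conj(Q) = id` we have
`⟪a, c⟫ = ⟪Q a, conj(Q) c⟫`, and `Q` is onto because `conj(Q) ∘ Q* = id`; so the annihilator of the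
pullback is the pullback of the annihilator of `L` along the same map. The Lagrangian identity
`conj L = L^⊥` therefore pulls back to the composition.
-/

noncomputable section

/-- A real structure on a complex inner product space: an anti-unitary involution `v ↦ v̄`. -/
structure RealStructure (W : Type*) [NormedAddCommGroup W] [InnerProductSpace ℂ W] where
  conj : W → W
  map_add : ∀ v w : W, conj (v + w) = conj v + conj w
  map_smul : ∀ (c : ℂ) (v : W), conj (c • v) = (starRingEnd ℂ) c • conj v
  invol : ∀ v : W, conj (conj v) = v
  inner_conj : ∀ v w : W, (inner ℂ (conj v) (conj w) : ℂ) = (starRingEnd ℂ) (inner ℂ v w : ℂ)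

/-- The real structure of `A ⊕ (−B)`. -/
def pairConj {A B : Type*} [NormedAddCommGroup A] [InnerProductSpace ℂ A]
    [NormedAddCommGroup B] [InnerProductSpace ℂ B]
    (rA : RealStructure A) (rB : RealStructure B) : A × B → A × B :=
  fun p => (rA.conj p.1, -rB.conj p.2)

/-- The Hermitian inner product of `A ⊕ B`. -/
def pairInner {A B : Type*} [NormedAddCommGroup A] [InnerProductSpace ℂ A]
    [NormedAddCommGroup B] [InnerProductSpace ℂ B] (x y : A × B) : ℂ :=
  (inner ℂ x.1 y.1 : ℂ) + (inner ℂ x.2 y.2 : ℂ)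

/-- A Lagrangian `L ⊆ A ⊕ (−B)`. -/
def IsLagrangianPair {A B : Type*} [NormedAddCommGroup A] [InnerProductSpace ℂ A]
    [NormedAddCommGroup B] [InnerProductSpace ℂ B]
    (rA : RealStructure A) (rB : RealStructure B) (L : Submodule ℂ (A × B)) : Prop :=
  pairConj rA rB '' (L : Set (A × B)) = {y : A × B | ∀ x ∈ L, pairInner x y = 0}

/-- The composition of two linear relations `L₀₁ ⊆ W₀ × W₁`, `L₁₂ ⊆ W₁ × W₂`. -/
def composeRel {W₀ W₁ W₂ : Type*} [NormedAddCommGroup W₀] [InnerProductSpace ℂ W₀]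
    [NormedAddCommGroup W₁] [InnerProductSpace ℂ W₁]
    [NormedAddCommGroup W₂] [InnerProductSpace ℂ W₂]
    (L01 : Submodule ℂ (W₀ × W₁)) (L12 : Submodule ℂ (W₁ × W₂)) :
    Submodule ℂ (W₀ × W₂) where
  carrier := {p | ∃ w₁ : W₁, (p.1, w₁) ∈ L01 ∧ (w₁, p.2) ∈ L12}
  add_mem' := by
    rintro a b ⟨w, hw1, hw2⟩ ⟨w', hw1', hw2'⟩
    exact ⟨w + w', L01.add_mem hw1 hw1', L12.add_mem hw2 hw2'⟩
  zero_mem' := ⟨0, L01.zero_mem, L12.zero_mem⟩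
  smul_mem' := by
    rintro c a ⟨w, hw1, hw2⟩
    exact ⟨c • w, L01.smul_mem c hw1, L12.smul_mem c hw2⟩

variable {W₁ W₂ : Type*}
  [NormedAddCommGroup W₁] [InnerProductSpace ℂ W₁] [CompleteSpace W₁]
  [NormedAddCommGroup W₂] [InnerProductSpace ℂ W₂] [CompleteSpace W₂]

section Lagrangian

variable {A A' B : Type*} [NormedAddCommGroup A] [InnerProductSpace ℂ A]
  [NormedAddCommGroup A'] [InnerProductSpace ℂ A'] [NormedAddCommGroup B] [InnerProductSpace ℂ B]

theorem composeRel_graph_eq_comap (f : A →ₗ[ℂ] A') (L : Submodule ℂ (A' × B)) :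
    composeRel f.graph L = L.comap (f.prodMap LinearMap.id) := by
  ext ⟨a, b⟩
  constructor
  · rintro ⟨w, hw, hwb⟩
    rw [LinearMap.mem_graph_iff] at hw
    simpa [← hw] using hwb
  · intro h
    exact ⟨f a, (LinearMap.mem_graph_iff ..).2 rfl, h⟩

theorem RealStructure.conj_injective (r : RealStructure A) : Function.Injective r.conj :=
  Function.LeftInverse.injective r.invol

theorem RealStructure.map_neg (r : RealStructure A) (v : A) : r.conj (-v) = -r.conj v :=
  (AddMonoidHom.mk' r.conj r.map_add).map_neg v

theorem pairConj_involutive (rA : RealStructure A) (rB : RealStructure B) :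
    Function.Involutive (pairConj rA rB) := fun p => by
  simp only [pairConj, rB.map_neg, rA.invol, rB.invol, neg_neg]

/-- `conj(Q)`. -/
def conjMap (rA : RealStructure A) (rA' : RealStructure A') (Q : A → A') : A → A' :=
  fun v => rA'.conj (Q (rA.conj v))

theorem surjective_of_conjMap_adjoint [CompleteSpace A] [CompleteSpace A']
    {rA : RealStructure A} {rA' : RealStructure A'} {Q : A →L[ℂ] A'}
    (h : ∀ v, conjMap rA rA' Q (ContinuousLinearMap.adjoint Q v) = v) :
    Function.Surjective Q := fun u =>
  ⟨_, rA'.conj_injective (h (rA'.conj u))⟩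

theorem image_pairConj_comap_prodMap (rA : RealStructure A) (rA' : RealStructure A')
    (rB : RealStructure B) (Q : A →ₗ[ℂ] A') (L : Submodule ℂ (A' × B)) :
    pairConj rA rB '' (L.comap (Q.prodMap LinearMap.id) : Set (A × B)) =
      Prod.map (conjMap rA rA' Q) id ⁻¹' (pairConj rA' rB '' (L : Set (A' × B))) := by
  rw [Set.image_eq_preimage_of_inverse (pairConj_involutive rA rB) (pairConj_involutive rA rB),
    Set.image_eq_preimage_of_inverse (pairConj_involutive rA' rB) (pairConj_involutive rA' rB)]
  ext ⟨c, d⟩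
  simp [pairConj, conjMap, rA'.invol]

theorem annihilator_comap_prodMap [CompleteSpace A] [CompleteSpace A']
    (rA : RealStructure A) (rA' : RealStructure A') {Q : A →L[ℂ] A'}
    (hQ : Function.Surjective Q)
    (hS : ∀ v, ContinuousLinearMap.adjoint Q (conjMap rA rA' Q v) = v) (L : Submodule ℂ (A' × B)) :
    {y : A × B | ∀ x ∈ L.comap ((Q : A →ₗ[ℂ] A').prodMap LinearMap.id), pairInner x y = 0} =
      Prod.map (conjMap rA rA' Q) id ⁻¹' {y : A' × B | ∀ x ∈ L, pairInner x y = 0} := by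
  have pairInner_prodMap : ∀ (a c : A) (b d : B),
      pairInner (a, b) (c, d) = pairInner (Q a, b) (conjMap rA rA' Q c, d) := fun a c b d => by
    simp only [pairInner, ← ContinuousLinearMap.adjoint_inner_right, hS]
  ext ⟨c, d⟩
  simp only [Set.mem_ofPred_eq, Set.mem_preimage, Prod.map_apply, id_eq, Prod.forall,
    Submodule.mem_comap, LinearMap.prodMap_apply, ContinuousLinearMap.coe_coe, LinearMap.id_coe]
  constructor
  · intro h u b hub
    obtain ⟨a, rfl⟩ := hQ u
    rw [← pairInner_prodMap]
    exact h a b hub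
  · intro h a b hab
    rw [pairInner_prodMap]
    exact h _ _ hab

theorem IsLagrangianPair.comap_prodMap [CompleteSpace A] [CompleteSpace A']
    {rA : RealStructure A} {rA' : RealStructure A'} {rB : RealStructure B}
    {L : Submodule ℂ (A' × B)} (hL : IsLagrangianPair rA' rB L) {Q : A →L[ℂ] A'}
    (hQS : ∀ v, conjMap rA rA' Q (ContinuousLinearMap.adjoint Q v) = v)
    (hSQ : ∀ v, ContinuousLinearMap.adjoint Q (conjMap rA rA' Q v) = v) :
    IsLagrangianPair rA rB (L.comap ((Q : A →ₗ[ℂ] A').prodMap LinearMap.id)) := by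
  rw [IsLagrangianPair, image_pairConj_comap_prodMap,
    annihilator_comap_prodMap rA rA' (surjective_of_conjMap_adjoint hQS) hSQ,
    ContinuousLinearMap.coe_coe, hL]

end Lagrangian

/-- If `L₀₁` is the graph of a bounded operator `Q₁` with `Q₁* = conj(Q₁)⁻¹`
(in particular `Q₁` is invertible), and `L₁₂` is any Lagrangian, then the
composition `L₀₁ ∘ L₁₂` is a Lagrangian. -/
theorem composition_lagrangian_of_bounded_graph
    (r₁ : RealStructure W₁) (r₂ : RealStructure W₂)
    (Q₁ : W₁ →L[ℂ] W₁)
    -- Q₁* = conj(Q₁)⁻¹, i.e. conj(Q₁) ∘ Q₁* = id and Q₁* ∘ conj(Q₁) = id: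
    (hQ₁ : ∀ v : W₁, r₁.conj (Q₁ (r₁.conj (ContinuousLinearMap.adjoint Q₁ v))) = v)
    (hQ₂ : ∀ v : W₁, ContinuousLinearMap.adjoint Q₁ (r₁.conj (Q₁ (r₁.conj v))) = v)
    (L12 : Submodule ℂ (W₁ × W₂)) (h12 : IsLagrangianPair r₁ r₂ L12) :
    IsLagrangianPair r₁ r₂ (composeRel (LinearMap.graph (Q₁ : W₁ →ₗ[ℂ] W₁)) L12) := by
  rw [composeRel_graph_eq_comap]
  exact h12.comap_prodMap hQ₁ hQ₂
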